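/- Let α, β be ordinals < ε(Ω) and let ξ be a nonzero additively indecomposable ordinal, i.e. ξ is closed under ordinal addition (the paper assumes the stronger hypothesis that ξ is strongly critical). If K_Ω α < ξ and K_Ω β < ξ, then K_Ω (α + β) < ξ. -/

import Mathlib

open Ordinal

/-- The least ordinal `λ` with `Ω ^ λ = λ`. -/
noncomputable def epsOmega (Ω : Ordinal) : Ordinal := sInf {x : Ordinal | Ω ^ x = x}

/-- The set `K_Ω α` of coefficients of `α`, defined by recursion on `α` via the
base-`Ω` Cantor normal form: `K_Ω α = {β₁,…,β_l} ∪ K_Ω α₁ ∪ ⋯ ∪ K_Ω α_l`. -/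
noncomputable def KOmega (Ω : Ordinal) : Ordinal → Set Ordinal :=
  WellFounded.fix Ordinal.lt_wf fun α IH =>
    {β | ∃ p ∈ Ordinal.CNF Ω α, p.2 = β} ∪
    {β | ∃ p ∈ Ordinal.CNF Ω α, ∃ h : p.1 < α, β ∈ IH p.1 h}

/-- The hierarchy `F^α`: `F^0 ξ = F ξ`, and for `α > 0`, `F^α ξ` is the least `γ` with
`ω^γ = γ`, `K_Ω α ∪ {ξ} < γ`, and `F^β η < γ` for all `η < γ` and `β < α` with `K_Ω β < γ`. -/
noncomputable def Hier (Ω : Ordinal) (F : Ordinal → Ordinal) : Ordinal → Ordinal → Ordinal :=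
  WellFounded.fix Ordinal.lt_wf fun α IH =>
    if _ : α = 0 then F
    else fun ξ => sInf {γ : Ordinal | omega0 ^ γ = γ ∧ (∀ x ∈ KOmega Ω α, x < γ) ∧ ξ < γ ∧
      ∀ η < γ, ∀ β, ∀ hβ : β < α, (∀ x ∈ KOmega Ω β, x < γ) → IH β hβ η < γ}

/-! Every element of `K_Ω γ` is a base-`Ω` coefficient, hence `< Ω`, so only `ξ ≤ Ω` needs
an argument. Then a coefficient `c < ξ` is absorbed by `Ω` (`c + Ω = Ω`), so an ordinal `x`
with coefficients `< ξ` satisfies `x + y = y` as soon as `x < Ω ^ f ≤ y`. Otherwise `y` is below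
`Ω ^ (e + 1)`, `e` the leading exponent of `x`, and adding `y` to `x` only raises the leading
coefficient `c` by some `q < ξ`; since `c + q < ξ ≤ Ω` there is no carry, and induction on `x`
handles the rest. -/

open Set

section epsOmega

variable {Ω : Ordinal}

theorem opow_epsOmega (hΩ : 1 < Ω) : Ω ^ epsOmega Ω = epsOmega Ω :=
  csInf_mem (s := {x : Ordinal | Ω ^ x = x}) ⟨_, nfp_fp (isNormal_opow hΩ) 0⟩

theorem lt_opow_of_lt_epsOmega (hΩ : 1 < Ω) {x : Ordinal} (hx : x < epsOmega Ω) : x < Ω ^ x :=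
  (right_le_opow x hΩ).lt_of_ne fun h => hx.not_ge (csInf_le' h.symm)

theorem log_lt_self_of_lt_epsOmega (hΩ : 1 < Ω) {x : Ordinal} (hx0 : x ≠ 0)
    (hx : x < epsOmega Ω) : log Ω x < x :=
  (lt_opow_iff_log_lt hΩ hx0).mp (lt_opow_of_lt_epsOmega hΩ hx)

theorem opow_mul_add_lt_epsOmega (hΩ : 1 < Ω) {m z u : Ordinal} (hz : z < Ω) (hu : u < Ω ^ m)
    (hm : m < epsOmega Ω) : Ω ^ m * z + u < epsOmega Ω :=
  opow_epsOmega hΩ ▸ opow_mul_add_lt_opow hz hu hm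

theorem opow_add_one_le_epsOmega (hΩ : 1 < Ω) {m : Ordinal} (hm : m < epsOmega Ω) :
    Ω ^ (m + 1) ≤ epsOmega Ω :=
  opow_epsOmega hΩ ▸ opow_le_opow_right hΩ.pos (Order.add_one_le_of_lt hm)

end epsOmega

section KOmega

variable {Ω : Ordinal}

theorem KOmega_eq (Ω α : Ordinal) : KOmega Ω α =
    {β | ∃ p ∈ CNF Ω α, p.2 = β} ∪ {β | ∃ p ∈ CNF Ω α, ∃ _ : p.1 < α, β ∈ KOmega Ω p.1} :=
  WellFounded.fix_eq _ _ _

theorem KOmega_subset_Iio (hΩ : 1 < Ω) (α : Ordinal) : KOmega Ω α ⊆ Iio Ω := by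
  induction α using WellFoundedLT.induction with
  | _ α IH =>
    rw [KOmega_eq]
    rintro β (⟨p, hp, rfl⟩ | ⟨p, -, hpα, hβ⟩)
    · exact CNF.snd_lt hΩ hp
    · exact IH p.1 hpα hβ

theorem KOmega_eq_biUnion (hΩ : 1 < Ω) {γ : Ordinal} (hγ : γ < epsOmega Ω) :
    KOmega Ω γ = ⋃ p ∈ CNF Ω γ, insert p.2 (KOmega Ω p.1) := by
  have hlt : ∀ p ∈ CNF Ω γ, p.1 < γ := fun p hp =>
    (CNF.fst_le_log hp).trans_lt <| log_lt_self_of_lt_epsOmega hΩ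
      (by rintro rfl; simp [CNF.zero_right] at hp) hγ
  ext β
  rw [KOmega_eq]
  simp only [mem_union, mem_ofPred_eq, mem_iUnion, mem_insert_iff, exists_prop]
  constructor
  · rintro (⟨p, hp, rfl⟩ | ⟨p, hp, -, hβ⟩)
    · exact ⟨p, hp, .inl rfl⟩
    · exact ⟨p, hp, .inr hβ⟩
  · rintro ⟨p, hp, rfl | hβ⟩
    · exact .inl ⟨p, hp, rfl⟩
    · exact .inr ⟨p, hp, hlt p hp, hβ⟩

theorem KOmega_opow_mul_add (hΩ : 1 < Ω) {m z u : Ordinal} (hz0 : z ≠ 0) (hz : z < Ω)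
    (hu : u < Ω ^ m) (hm : m < epsOmega Ω) :
    KOmega Ω (Ω ^ m * z + u) = insert z (KOmega Ω m) ∪ KOmega Ω u := by
  have hu' : u < epsOmega Ω := le_add_self.trans_lt (opow_mul_add_lt_epsOmega hΩ hz hu hm)
  rw [KOmega_eq_biUnion hΩ (opow_mul_add_lt_epsOmega hΩ hz hu hm), CNF.opow_mul_add hΩ hz0 hz hu,
    KOmega_eq_biUnion hΩ hu']
  simp only [List.mem_cons, iUnion_or, iUnion_union_distrib, iUnion_iUnion_eq_left]

theorem KOmega_eq_union (hΩ : 1 < Ω) {γ : Ordinal} (hγ0 : γ ≠ 0) (hγ : γ < epsOmega Ω) :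
    KOmega Ω γ =
      insert (γ / Ω ^ log Ω γ) (KOmega Ω (log Ω γ)) ∪ KOmega Ω (γ % Ω ^ log Ω γ) := by
  conv_lhs => rw [← div_add_mod γ (Ω ^ log Ω γ)]
  exact KOmega_opow_mul_add hΩ (div_opow_log_pos Ω hγ0).ne' (div_opow_log_lt γ hΩ)
    (mod_lt γ (opow_pos _ hΩ.pos).ne') ((log_lt_self_of_lt_epsOmega hΩ hγ0 hγ).trans hγ)

end KOmega

section Principal

variable {Ω ξ : Ordinal} (hΩ : 1 < Ω) (hξ : IsPrincipal (· + ·) ξ) (hξΩ : ξ ≤ Ω)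
include hξ hξΩ

theorem opow_mul_add_eq_right {e c y : Ordinal} (hc : c < ξ) (hy : Ω ^ (e + 1) ≤ y) :
    Ω ^ e * c + y = y := by
  rw [← Ordinal.add_sub_cancel_of_le hy, ← add_assoc, opow_add_one, ← mul_add,
    hξ.add_eq_right_of_le hc hξΩ]

include hΩ

theorem add_eq_right_of_lt_opow {x y f : Ordinal} (hx : x < epsOmega Ω)
    (hKx : KOmega Ω x ⊆ Iio ξ) (hxf : x < Ω ^ f) (hfy : Ω ^ f ≤ y) : x + y = y := by
  induction x using WellFoundedLT.induction with
  | _ x IH =>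
  rcases eq_or_ne x 0 with rfl | hx0
  · exact zero_add y
  rw [KOmega_eq_union hΩ hx0 hx, union_subset_iff, insert_subset_iff] at hKx
  obtain ⟨⟨hc, -⟩, hKr⟩ := hKx
  have hr : x % Ω ^ log Ω x < x := mod_opow_log_lt_self Ω hx0
  have hef : log Ω x + 1 ≤ f := Order.add_one_le_of_lt ((lt_opow_iff_log_lt hΩ hx0).mp hxf)
  rw [← div_add_mod x (Ω ^ log Ω x), add_assoc, IH _ hr (hr.trans hx) hKr (hr.trans hxf),
    opow_mul_add_eq_right hξ hξΩ hc ((opow_le_opow_right hΩ.pos hef).trans hfy)]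

theorem KOmega_opow_mul_add_subset_Iio {m c u : Ordinal} (hm : m < epsOmega Ω) (hc0 : c ≠ 0)
    (hc : c < ξ) (hu : u < Ω ^ (m + 1)) (hKm : KOmega Ω m ⊆ Iio ξ)
    (hKu : KOmega Ω u ⊆ Iio ξ) : KOmega Ω (Ω ^ m * c + u) ⊆ Iio ξ := by
  rcases lt_or_ge u (Ω ^ m) with hum | hmu
  · rw [KOmega_opow_mul_add hΩ hc0 (hc.trans_le hξΩ) hum hm]
    exact union_subset (insert_subset hc hKm) hKu
  have hu0 : u ≠ 0 := ((opow_pos m hΩ.pos).trans_le hmu).ne'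
  rw [KOmega_eq_union hΩ hu0 (hu.trans_le (opow_add_one_le_epsOmega hΩ hm)),
    (log_eq_iff hΩ hu0 m).mpr ⟨hmu, hu⟩, union_subset_iff, insert_subset_iff] at hKu
  obtain ⟨⟨hq, -⟩, hKw⟩ := hKu
  rw [← div_add_mod u (Ω ^ m), ← add_assoc, ← mul_add,
    KOmega_opow_mul_add hΩ (by simp [hc0]) ((hξ hc hq).trans_le hξΩ)
      (mod_lt u (opow_pos m hΩ.pos).ne') hm]
  exact union_subset (insert_subset (hξ hc hq) hKm) hKw

theorem KOmega_add_subset_Iio {x y : Ordinal} (hx : x < epsOmega Ω)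
    (hKx : KOmega Ω x ⊆ Iio ξ) (hKy : KOmega Ω y ⊆ Iio ξ) : KOmega Ω (x + y) ⊆ Iio ξ := by
  induction x using WellFoundedLT.induction with
  | _ x IH =>
  rcases eq_or_ne x 0 with rfl | hx0
  · rwa [zero_add]
  have hxe : x < Ω ^ (log Ω x + 1) := lt_opow_succ_log_self hΩ x
  rcases lt_or_ge y (Ω ^ (log Ω x + 1)) with hy_lt | hy_ge
  · have hKx' := hKx
    rw [KOmega_eq_union hΩ hx0 hx, union_subset_iff, insert_subset_iff] at hKx'
    obtain ⟨⟨hc, hKe⟩, hKr⟩ := hKx'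
    have hr : x % Ω ^ log Ω x < x := mod_opow_log_lt_self Ω hx0
    have hry : x % Ω ^ log Ω x + y < Ω ^ (log Ω x + 1) := calc
      _ < x % Ω ^ log Ω x + Ω ^ (log Ω x + 1) := add_lt_add_right hy_lt _
      _ = Ω ^ (log Ω x + 1) :=
        add_eq_right_of_lt_opow hΩ hξ hξΩ (hr.trans hx) hKr (hr.trans hxe) le_rfl
    rw [← div_add_mod x (Ω ^ log Ω x), add_assoc]
    exact KOmega_opow_mul_add_subset_Iio hΩ hξ hξΩ ((log_le_self Ω x).trans_lt hx)
      (div_opow_log_pos Ω hx0).ne' hc hry hKe (IH _ hr (hr.trans hx) hKr)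
  · rwa [add_eq_right_of_lt_opow hΩ hξ hξΩ hx hKx hxe hy_ge]

end Principal

theorem stmt7_general (Ω : Ordinal) (hΩ : 1 < Ω) (α β ξ : Ordinal)
    (hα : α < epsOmega Ω)
    (hadd : ∀ a < ξ, ∀ b < ξ, a + b < ξ)
    (hKα : ∀ x ∈ KOmega Ω α, x < ξ) (hKβ : ∀ x ∈ KOmega Ω β, x < ξ) :
    ∀ x ∈ KOmega Ω (α + β), x < ξ := by
  rcases le_total Ω ξ with hΩξ | hξΩ
  · exact fun x hx => (KOmega_subset_Iio hΩ _ hx).trans_le hΩξ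
  · exact KOmega_add_subset_Iio hΩ (fun a b ha hb => hadd a ha b hb) hξΩ hα hKα hKβ

/-- If α, β < ε(Ω) and ξ is a nonzero additively indecomposable ordinal (i.e. closed under
ordinal addition), then K_Ω α < ξ and K_Ω β < ξ imply K_Ω (α + β) < ξ. -/
theorem stmt7 (Ω : Ordinal) (hΩ : 1 < Ω) (α β ξ : Ordinal)
    (hα : α < epsOmega Ω) (hβ : β < epsOmega Ω)
    (hξ0 : 0 < ξ) (hadd : ∀ a < ξ, ∀ b < ξ, a + b < ξ)
    (hKα : ∀ x ∈ KOmega Ω α, x < ξ) (hKβ : ∀ x ∈ KOmega Ω β, x < ξ) :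
    ∀ x ∈ KOmega Ω (α + β), x < ξ :=
  stmt7_general Ω hΩ α β ξ hα hadd hKα hKβ
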